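/- Biased SGD convergence: Let f: R^n → R be differentiable with L-Lipschitz gradient and f ≥ f* > −∞. Consider iterates x^k = x^{k−1} − γ g^k where, conditioned on x^{k−1}, the stochastic gradient g^k satisfies E[g^k | x^{k−1}] = ∇f(x^{k−1}) + b(x^{k−1}) with ‖b(x)‖ ≤ ε for all x, and E[‖g^k − E[g^k|x^{k−1}]‖² | x^{k−1}] ≤ ν². If 0 < γ ≤ 1/L, then for any t ≥ 1: E[(1/t) Σ_{k=1}^t ‖∇f(x^{k−1})‖²] ≤ (2/(γ t))(f(x⁰) − f*) + γ L ν² + ε². -/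

import Mathlib

/-!
The descent lemma `f (a + v) ≤ f a + ⟪∇f a, v⟫ + L/2 ‖v‖²` for the step `v = -γ g` gives, after
taking expectations and replacing `g` by its conditional mean `m = ∇f + b` wherever it is paired
with something known at time `k`, `E f(x⁺) ≤ E f(x) - γ E⟪∇f, m⟫ + Lγ²/2 (ν² + E‖m‖²)`.
Since `Lγ ≤ 1` and `‖m‖²/2 - ⟪∇f, m⟫ = (‖b‖² - ‖∇f‖²)/2`, every step lowers `E f` by
`γ/2 E‖∇f(x)‖²` up to an error `γ/2 ε² + Lγ²/2 ν²`. Summing over `t` steps and using `f ≥ f*`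
gives the bound.
-/

open MeasureTheory Real Finset
open scoped RealInnerProductSpace BigOperators

section Descent

variable {E : Type*} [NormedAddCommGroup E] [InnerProductSpace ℝ E] [CompleteSpace E]
  {f : E → ℝ} {f' : E → E} {L : ℝ}

theorem le_add_inner_add_of_lipschitz_gradient (hf : ∀ x, HasGradientAt f (f' x) x)
    (hlip : ∀ x y, ‖f' x - f' y‖ ≤ L * ‖x - y‖) (a v : E) :
    f (a + v) ≤ f a + ⟪f' a, v⟫ + L / 2 * ‖v‖ ^ 2 := by
  set φ : ℝ → ℝ := fun s => f (a + s • v) - s * ⟪f' a, v⟫ - L / 2 * s ^ 2 * ‖v‖ ^ 2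
  have hφ (s : ℝ) : HasDerivAt φ (⟪f' (a + s • v), v⟫ - ⟪f' a, v⟫ - L * s * ‖v‖ ^ 2) s := by
    have hline : HasDerivAt (fun s : ℝ => a + s • v) v s := by
      simpa using ((hasDerivAt_id s).smul_const v).const_add a
    have hfline := (hf (a + s • v)).hasFDerivAt.comp_hasDerivAt s hline
    simp only [Function.comp_def, InnerProductSpace.toDual_apply_apply] at hfline
    have h := (hfline.sub ((hasDerivAt_id s).mul_const ⟪f' a, v⟫)).sub
      ((((hasDerivAt_id s).pow 2).const_mul (L / 2)).mul_const (‖v‖ ^ 2))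
    exact h.congr_deriv (by simp only [id, Nat.cast_ofNat]; ring)
  have hφ'_nonpos (s : ℝ) (hs : 0 < s) :
      ⟪f' (a + s • v), v⟫ - ⟪f' a, v⟫ - L * s * ‖v‖ ^ 2 ≤ 0 := by
    have : ⟪f' (a + s • v) - f' a, v⟫ ≤ L * s * ‖v‖ ^ 2 :=
      calc ⟪f' (a + s • v) - f' a, v⟫ ≤ ‖f' (a + s • v) - f' a‖ * ‖v‖ := real_inner_le_norm _ _
        _ ≤ L * ‖s • v‖ * ‖v‖ := by
          gcongr; simpa using hlip (a + s • v) a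
        _ = L * s * ‖v‖ ^ 2 := by rw [norm_smul, norm_of_nonneg hs.le]; ring
    rw [inner_sub_left] at this
    linarith
  have hanti : AntitoneOn φ (Set.Ici 0) :=
    antitoneOn_of_hasDerivWithinAt_nonpos (convex_Ici 0)
      (fun s _ => (hφ s).continuousAt.continuousWithinAt)
      (fun s _ => (hφ s).hasDerivWithinAt) (fun s hs => hφ'_nonpos s (by simpa using hs))
  have h10 : φ 1 ≤ φ 0 := hanti Set.self_mem_Ici (Set.mem_Ici.2 zero_le_one) zero_le_one
  norm_num [φ] at h10
  linarith

end Descent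

section CondExp

variable {Ω E : Type*} {m mΩ : MeasurableSpace Ω} {μ : Measure Ω}
  [NormedAddCommGroup E] [InnerProductSpace ℝ E]

theorem MeasureTheory.MemLp.integrable_inner {V G : Ω → E} (hV : MemLp V 2 μ) (hG : MemLp G 2 μ) :
    Integrable (fun ω => ⟪V ω, G ω⟫) μ :=
  (L2.integrable_inner (hV.toLp V) (hG.toLp G)).congr <| by
    filter_upwards [hV.coeFn_toLp, hG.coeFn_toLp] with ω hVω hGω
    rw [hVω, hGω]

variable [CompleteSpace E]

theorem integral_inner_condExp (hm : m ≤ mΩ) [SigmaFinite (μ.trim hm)] {V G : Ω → E}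
    (hV : AEStronglyMeasurable[m] V μ) (hVG : Integrable (fun ω => ⟪V ω, G ω⟫) μ)
    (hG : Integrable G μ) :
    ∫ ω, ⟪V ω, G ω⟫ ∂μ = ∫ ω, ⟪V ω, μ[G | m] ω⟫ ∂μ := by
  rw [← integral_condExp hm]
  exact integral_congr_ae (condExp_bilin_of_aestronglyMeasurable_left (innerSL ℝ) hV hVG hG)

theorem integral_norm_sq_eq_of_condExp_ae_eq [IsFiniteMeasure μ] (hm : m ≤ mΩ)
    {G M : Ω → E} (hG : MemLp G 2 μ) (hM : MemLp M 2 μ) (hGM : μ[G | m] =ᵐ[μ] M) :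
    ∫ ω, ‖G ω‖ ^ 2 ∂μ = ∫ ω, ‖G ω - M ω‖ ^ 2 ∂μ + ∫ ω, ‖M ω‖ ^ 2 ∂μ := by
  have hMm : AEStronglyMeasurable[m] M μ :=
    stronglyMeasurable_condExp.aestronglyMeasurable.congr hGM
  have hMG : ∫ ω, ⟪M ω, G ω⟫ ∂μ = ∫ ω, ‖M ω‖ ^ 2 ∂μ := by
    rw [integral_inner_condExp hm hMm (hM.integrable_inner hG) (hG.integrable one_le_two)]
    refine integral_congr_ae ?_
    filter_upwards [hGM] with ω hω
    rw [hω, real_inner_self_eq_norm_sq]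
  have hexpand : (fun ω => ‖G ω - M ω‖ ^ 2) =
      fun ω => ‖G ω‖ ^ 2 - 2 * ⟪M ω, G ω⟫ + ‖M ω‖ ^ 2 := by
    ext ω; rw [norm_sub_sq_real, real_inner_comm]
  rw [hexpand, integral_add, integral_sub, integral_const_mul, hMG]
  · ring
  · exact hG.norm.integrable_sq
  · exact (hM.integrable_inner hG).const_mul 2
  · exact hG.norm.integrable_sq.sub ((hM.integrable_inner hG).const_mul 2)
  · exact hM.norm.integrable_sq

theorem integral_le_of_ae_condExp_le [IsProbabilityMeasure μ] (hm : m ≤ mΩ) {h : Ω → ℝ} {c : ℝ}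
    (hc : ∀ᵐ ω ∂μ, μ[h | m] ω ≤ c) : ∫ ω, h ω ∂μ ≤ c := by
  rw [← integral_condExp hm]
  simpa using integral_mono_ae integrable_condExp (integrable_const c) hc

end CondExp

theorem LipschitzWith.memLp_comp {Ω E F : Type*} {mΩ : MeasurableSpace Ω} {μ : Measure Ω}
    [IsFiniteMeasure μ] [NormedAddCommGroup E] [NormedAddCommGroup F] {K : NNReal} {g : E → F}
    (hg : LipschitzWith K g) {X : Ω → E} {p : ENNReal} (hX : MemLp X p μ) :
    MemLp (fun ω => g (X ω)) p μ := by
  have hg0 : LipschitzWith (K + 0) fun y => g y - g 0 := hg.sub (LipschitzWith.const (g 0))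
  convert (hg0.comp_memLp (sub_self _) hX).add (memLp_const (g 0)) using 1
  ext ω
  simp

theorem sum_range_le_of_le_sub_add {a d : ℕ → ℝ} {r : ℝ} (h : ∀ k, a (k + 1) ≤ a k - d k + r)
    (T : ℕ) : ∑ k ∈ range T, d k ≤ a 0 - a T + T * r := by
  induction T with
  | zero => simp
  | succ T ih =>
    rw [sum_range_succ, Nat.cast_succ]
    linarith [h T]

theorem norm_add_sq_div_two_sub_inner {E : Type*} [NormedAddCommGroup E] [InnerProductSpace ℝ E]
    (d b : E) : ‖d + b‖ ^ 2 / 2 - ⟪d, d + b⟫ = (‖b‖ ^ 2 - ‖d‖ ^ 2) / 2 := by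
  rw [norm_add_sq_real, inner_add_right, real_inner_self_eq_norm_sq]
  ring

section SGD

variable {Ω E : Type*} {m mΩ : MeasurableSpace Ω} {μ : Measure Ω}
  [NormedAddCommGroup E] [InnerProductSpace ℝ E] [CompleteSpace E]
  {f : E → ℝ} {f' : E → E} {L fstar : ℝ} {X G : Ω → E}

theorem integrable_comp_of_lipschitz_gradient [IsFiniteMeasure μ]
    (hf : ∀ x, HasGradientAt f (f' x) x) (hlip : ∀ x y, ‖f' x - f' y‖ ≤ L * ‖x - y‖)
    (hfstar : ∀ x, fstar ≤ f x) (hX : MemLp X 2 μ) : Integrable (fun ω => f (X ω)) μ := by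
  have hfc : Continuous f :=
    continuous_iff_continuousAt.2 fun x => (hf x).differentiableAt.continuousAt
  have hup (y : E) : f y ≤ f 0 + ‖f' 0‖ * ‖y‖ + L / 2 * ‖y‖ ^ 2 := by
    have := le_add_inner_add_of_lipschitz_gradient hf hlip 0 y
    rw [zero_add] at this
    linarith [real_inner_le_norm (f' 0) y]
  refine integrable_of_le_of_le (hfc.comp_aestronglyMeasurable hX.1)
    (ae_of_all _ fun ω => hfstar (X ω)) (ae_of_all _ fun ω => hup (X ω)) (integrable_const fstar) ?_
  exact ((integrable_const _).add ((hX.integrable one_le_two).norm.const_mul _)).add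
    (hX.norm.integrable_sq.const_mul _)

theorem integral_comp_sub_smul_le [IsFiniteMeasure μ]
    (hf : ∀ x, HasGradientAt f (f' x) x) (hL : 0 ≤ L)
    (hlip : ∀ x y, ‖f' x - f' y‖ ≤ L * ‖x - y‖) (hfstar : ∀ x, fstar ≤ f x)
    (hX : MemLp X 2 μ) (hG : MemLp G 2 μ) (γ : ℝ) :
    ∫ ω, f (X ω - γ • G ω) ∂μ ≤ ∫ ω, f (X ω) ∂μ - γ * ∫ ω, ⟪f' (X ω), G ω⟫ ∂μ
      + L * γ ^ 2 / 2 * ∫ ω, ‖G ω‖ ^ 2 ∂μ := by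
  have hD : MemLp (fun ω => f' (X ω)) 2 μ :=
    (lipschitzWith_iff_norm_sub_le (C := ⟨L, hL⟩).2 hlip).memLp_comp hX
  have hpoint (ω : Ω) : f (X ω - γ • G ω) ≤
      f (X ω) - γ * ⟪f' (X ω), G ω⟫ + L * γ ^ 2 / 2 * ‖G ω‖ ^ 2 := by
    have := le_add_inner_add_of_lipschitz_gradient hf hlip (X ω) (-(γ • G ω))
    rw [← sub_eq_add_neg, inner_neg_right, real_inner_smul_right, norm_neg, norm_smul,
      Real.norm_eq_abs, mul_pow, sq_abs] at this
    linarith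
  have hfX := integrable_comp_of_lipschitz_gradient hf hlip hfstar hX
  have hDG := (hD.integrable_inner hG).const_mul γ
  have hGG := hG.norm.integrable_sq.const_mul (L * γ ^ 2 / 2)
  have hfXG := integrable_comp_of_lipschitz_gradient hf hlip hfstar (hX.sub (hG.const_smul γ))
  calc ∫ ω, f (X ω - γ • G ω) ∂μ
      ≤ ∫ ω, (f (X ω) - γ * ⟪f' (X ω), G ω⟫ + L * γ ^ 2 / 2 * ‖G ω‖ ^ 2) ∂μ :=
        integral_mono hfXG ((hfX.sub hDG).add hGG) hpoint
    _ = _ := by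
      rw [integral_add, integral_sub hfX hDG, integral_const_mul, integral_const_mul]
      · exact hfX.sub hDG
      · exact hGG

theorem integral_biased_sgd_step_le [IsProbabilityMeasure μ]
    (hf : ∀ x, HasGradientAt f (f' x) x) (hL : 0 ≤ L)
    (hlip : ∀ x y, ‖f' x - f' y‖ ≤ L * ‖x - y‖) (hfstar : ∀ x, fstar ≤ f x)
    {γ ε ν : ℝ} (hγ : 0 ≤ γ) (hγL : γ * L ≤ 1) {bias : E → E} (hbias : ∀ y, ‖bias y‖ ≤ ε)
    (hm : m ≤ mΩ) (hXm : AEStronglyMeasurable[m] X μ) (hX : MemLp X 2 μ) (hG : MemLp G 2 μ)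
    (hmean : μ[G | m] =ᵐ[μ] fun ω => f' (X ω) + bias (X ω))
    (hvar : ∫ ω, ‖G ω - (f' (X ω) + bias (X ω))‖ ^ 2 ∂μ ≤ ν ^ 2) :
    ∫ ω, f (X ω - γ • G ω) ∂μ ≤ ∫ ω, f (X ω) ∂μ - γ / 2 * ∫ ω, ‖f' (X ω)‖ ^ 2 ∂μ
      + γ / 2 * ε ^ 2 + L * γ ^ 2 / 2 * ν ^ 2 := by
  set D := fun ω => f' (X ω)
  set M := fun ω => f' (X ω) + bias (X ω)
  have hlipW : LipschitzWith ⟨L, hL⟩ f' := lipschitzWith_iff_norm_sub_le.2 hlip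
  have hDm : AEStronglyMeasurable[m] D μ := hlipW.continuous.comp_aestronglyMeasurable hXm
  have hD : MemLp D 2 μ := hlipW.memLp_comp hX
  have hB : MemLp (fun ω => bias (X ω)) 2 μ := by
    refine MemLp.of_bound ?_ ε (ae_of_all _ fun ω => hbias (X ω))
    have hMm : AEStronglyMeasurable M μ :=
      (stronglyMeasurable_condExp.mono hm).aestronglyMeasurable.congr hmean
    convert hMm.sub (hDm.mono hm) using 1
    ext ω
    simp [M, D]
  have hM : MemLp M 2 μ := hD.add hB
  have hDG : ∫ ω, ⟪D ω, G ω⟫ ∂μ = ∫ ω, ⟪D ω, M ω⟫ ∂μ := by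
    rw [integral_inner_condExp hm hDm (hD.integrable_inner hG) (hG.integrable one_le_two)]
    refine integral_congr_ae ?_
    filter_upwards [hmean] with ω hω
    rw [hω]
  have hGG : ∫ ω, ‖G ω‖ ^ 2 ∂μ ≤ ν ^ 2 + ∫ ω, ‖M ω‖ ^ 2 ∂μ := by
    rw [integral_norm_sq_eq_of_condExp_ae_eq hm hG hM hmean]
    linarith
  have hbias_term : (∫ ω, ‖M ω‖ ^ 2 ∂μ) / 2 - ∫ ω, ⟪D ω, M ω⟫ ∂μ
      ≤ ε ^ 2 / 2 - (∫ ω, ‖D ω‖ ^ 2 ∂μ) / 2 := by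
    have hpoint (ω : Ω) : ‖M ω‖ ^ 2 / 2 - ⟪D ω, M ω⟫ ≤ ε ^ 2 / 2 - ‖D ω‖ ^ 2 / 2 := by
      rw [norm_add_sq_div_two_sub_inner]
      have := hbias (X ω)
      nlinarith [norm_nonneg (bias (X ω))]
    have hMM := hM.norm.integrable_sq.div_const 2
    have hDM := hD.integrable_inner hM
    have hDD := hD.norm.integrable_sq.div_const 2
    have := integral_mono (f := fun ω => ‖M ω‖ ^ 2 / 2 - ⟪D ω, M ω⟫)
      (g := fun ω => ε ^ 2 / 2 - ‖D ω‖ ^ 2 / 2) (hMM.sub hDM) ((integrable_const _).sub hDD) hpoint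
    rwa [integral_sub hMM hDM, integral_sub (integrable_const _) hDD, integral_const,
      probReal_univ, one_smul, integral_div, integral_div] at this
  have hMM0 : 0 ≤ ∫ ω, ‖M ω‖ ^ 2 ∂μ := integral_nonneg fun ω => sq_nonneg _
  have hLγ : L * γ ^ 2 ≤ γ := by nlinarith
  calc ∫ ω, f (X ω - γ • G ω) ∂μ
      ≤ ∫ ω, f (X ω) ∂μ - γ * ∫ ω, ⟪D ω, M ω⟫ ∂μ
          + L * γ ^ 2 / 2 * (ν ^ 2 + ∫ ω, ‖M ω‖ ^ 2 ∂μ) := by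
        rw [← hDG]
        have hLγ0 : 0 ≤ L * γ ^ 2 / 2 := by positivity
        linarith [integral_comp_sub_smul_le hf hL hlip hfstar hX hG γ,
          mul_le_mul_of_nonneg_left hGG hLγ0]
    _ ≤ ∫ ω, f (X ω) ∂μ + γ * ((∫ ω, ‖M ω‖ ^ 2 ∂μ) / 2 - ∫ ω, ⟪D ω, M ω⟫ ∂μ)
          + L * γ ^ 2 / 2 * ν ^ 2 := by
        nlinarith [mul_le_mul_of_nonneg_right hLγ hMM0]
    _ ≤ ∫ ω, f (X ω) ∂μ + γ * (ε ^ 2 / 2 - (∫ ω, ‖D ω‖ ^ 2 ∂μ) / 2)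
          + L * γ ^ 2 / 2 * ν ^ 2 := by
        gcongr
    _ = _ := by ring

end SGD

theorem stmt9_general {n : ℕ} {Ω : Type*} {mΩ : MeasurableSpace Ω}
    (μ : Measure Ω) [IsProbabilityMeasure μ]
    (ℱ : Filtration ℕ mΩ)
    (f : EuclideanSpace ℝ (Fin n) → ℝ)
    (f' : EuclideanSpace ℝ (Fin n) → EuclideanSpace ℝ (Fin n))
    (hf : ∀ x, HasGradientAt f (f' x) x)
    (L : ℝ) (hL : 0 < L)
    (hlip : ∀ x y, ‖f' x - f' y‖ ≤ L * ‖x - y‖)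
    (fstar : ℝ) (hfstar : ∀ x, fstar ≤ f x)
    (γ ε ν : ℝ) (hγ : 0 < γ) (hγL : γ ≤ 1 / L)
    (x : ℕ → Ω → EuclideanSpace ℝ (Fin n))
    (g : ℕ → Ω → EuclideanSpace ℝ (Fin n))
    (bias : EuclideanSpace ℝ (Fin n) → EuclideanSpace ℝ (Fin n))
    (hbias : ∀ y, ‖bias y‖ ≤ ε)
    (x0 : EuclideanSpace ℝ (Fin n))
    (hx0 : ∀ ω, x 0 ω = x0)
    (hrec : ∀ k : ℕ, ∀ ω, x (k + 1) ω = x k ω - γ • g (k + 1) ω)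
    (hx_adapted : MeasureTheory.StronglyAdapted ℱ x)
    (hg_L2 : ∀ k, MemLp (g k) 2 μ)
    (hcond_mean : ∀ k : ℕ,
      μ[g (k + 1) | ℱ k] =ᵐ[μ] fun ω => f' (x k ω) + bias (x k ω))
    (hcond_var : ∀ k : ℕ, ∀ᵐ ω ∂μ,
      (μ[(fun ω' => ‖g (k + 1) ω' - (f' (x k ω') + bias (x k ω'))‖ ^ 2) |
        ℱ k]) ω ≤ ν ^ 2)
    (t : ℕ) (ht : 1 ≤ t) :
    (∫ ω, (1 / (t : ℝ)) * ∑ k ∈ Finset.range t, ‖f' (x k ω)‖ ^ 2 ∂μ) ≤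
      2 / (γ * t) * (f x0 - fstar) + γ * L * ν ^ 2 + ε ^ 2 := by
  have hγL' : γ * L ≤ 1 := by rwa [le_div_iff₀ hL] at hγL
  have hx (k : ℕ) : MemLp (x k) 2 μ := by
    induction k with
    | zero => simpa [funext hx0] using memLp_const (μ := μ) (p := 2) x0
    | succ k ih =>
      rw [show x (k + 1) = x k - γ • g (k + 1) from funext (hrec k)]
      exact ih.sub ((hg_L2 (k + 1)).const_smul γ)
  have hstep (k : ℕ) : ∫ ω, f (x (k + 1) ω) ∂μ ≤ ∫ ω, f (x k ω) ∂μ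
      - γ / 2 * ∫ ω, ‖f' (x k ω)‖ ^ 2 ∂μ + (γ / 2 * ε ^ 2 + L * γ ^ 2 / 2 * ν ^ 2) := by
    simp_rw [hrec k]
    have := integral_biased_sgd_step_le hf hL.le hlip hfstar hγ.le hγL' hbias (ℱ.le k)
      (hx_adapted k).aestronglyMeasurable (hx k) (hg_L2 (k + 1)) (hcond_mean k)
      (integral_le_of_ae_condExp_le (ℱ.le k) (hcond_var k))
    linarith
  have hsum := sum_range_le_of_le_sub_add (a := fun k => ∫ ω, f (x k ω) ∂μ)
    (d := fun k => γ / 2 * ∫ ω, ‖f' (x k ω)‖ ^ 2 ∂μ) hstep t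
  have hfstar_le : fstar ≤ ∫ ω, f (x t ω) ∂μ := by
    simpa using integral_mono (integrable_const fstar)
      (integrable_comp_of_lipschitz_gradient hf hlip hfstar (hx t)) fun ω => hfstar _
  have hlipW : LipschitzWith ⟨L, hL.le⟩ f' := lipschitzWith_iff_norm_sub_le.2 hlip
  rw [integral_const_mul,
    integral_finsetSum _ fun k _ => (hlipW.memLp_comp (hx k)).norm.integrable_sq]
  simp only [hx0, integral_const, probReal_univ, one_smul, ← mul_sum] at hsum
  have ht0 : (0 : ℝ) < t := by exact_mod_cast ht
  calc 1 / (t : ℝ) * ∑ k ∈ range t, ∫ ω, ‖f' (x k ω)‖ ^ 2 ∂μ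
      = 2 / (γ * t) * (γ / 2 * ∑ k ∈ range t, ∫ ω, ‖f' (x k ω)‖ ^ 2 ∂μ) := by
        field_simp
    _ ≤ 2 / (γ * t) * (f x0 - fstar + t * (γ / 2 * ε ^ 2 + L * γ ^ 2 / 2 * ν ^ 2)) := by
        gcongr
        linarith
    _ = 2 / (γ * t) * (f x0 - fstar) + γ * L * ν ^ 2 + ε ^ 2 := by
        field_simp
        ring

/-- convergence of biased SGD (Theorem 2 of the paper).
With `L`-Lipschitz gradient, `f ≥ f*`, iterates `x^k = x^{k−1} − γ g^k`,
conditionally biased gradients `E[g^k | x^{k−1}] = ∇f(x^{k−1}) + b(x^{k−1})`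
with `‖b‖ ≤ ε` and conditional variance `≤ ν²`, and `0 < γ ≤ 1/L`:
`E[(1/t) Σ_{k=1}^t ‖∇f(x^{k−1})‖²] ≤ (2/(γt))(f(x⁰) − f*) + γLν² + ε²`. -/
theorem stmt9 {n : ℕ} {Ω : Type*} {mΩ : MeasurableSpace Ω}
    (μ : Measure Ω) [IsProbabilityMeasure μ]
    (ℱ : Filtration ℕ mΩ)
    (f : EuclideanSpace ℝ (Fin n) → ℝ)
    (f' : EuclideanSpace ℝ (Fin n) → EuclideanSpace ℝ (Fin n))
    (hf : ∀ x, HasGradientAt f (f' x) x)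
    (L : ℝ) (hL : 0 < L)
    (hlip : ∀ x y, ‖f' x - f' y‖ ≤ L * ‖x - y‖)
    (fstar : ℝ) (hfstar : ∀ x, fstar ≤ f x)
    (γ ε ν : ℝ) (hγ : 0 < γ) (hγL : γ ≤ 1 / L) (hε : 0 ≤ ε) (hν : 0 ≤ ν)
    (x : ℕ → Ω → EuclideanSpace ℝ (Fin n))
    (g : ℕ → Ω → EuclideanSpace ℝ (Fin n))
    (bias : EuclideanSpace ℝ (Fin n) → EuclideanSpace ℝ (Fin n))
    (hbias : ∀ y, ‖bias y‖ ≤ ε)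
    (x0 : EuclideanSpace ℝ (Fin n))
    (hx0 : ∀ ω, x 0 ω = x0)
    (hrec : ∀ k : ℕ, ∀ ω, x (k + 1) ω = x k ω - γ • g (k + 1) ω)
    (hx_adapted : MeasureTheory.StronglyAdapted ℱ x)
    (hg_meas : ∀ k, Measurable (g k))
    (hg_L2 : ∀ k, MemLp (g k) 2 μ)
    (hcond_mean : ∀ k : ℕ,
      μ[g (k + 1) | ℱ k] =ᵐ[μ] fun ω => f' (x k ω) + bias (x k ω))
    (hcond_var : ∀ k : ℕ, ∀ᵐ ω ∂μ,
      (μ[(fun ω' => ‖g (k + 1) ω' - (f' (x k ω') + bias (x k ω'))‖ ^ 2) |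
        ℱ k]) ω ≤ ν ^ 2)
    (t : ℕ) (ht : 1 ≤ t) :
    (∫ ω, (1 / (t : ℝ)) * ∑ k ∈ Finset.range t, ‖f' (x k ω)‖ ^ 2 ∂μ) ≤
      2 / (γ * t) * (f x0 - fstar) + γ * L * ν ^ 2 + ε ^ 2 :=
  stmt9_general μ ℱ f f' hf L hL hlip fstar hfstar γ ε ν hγ hγL x g bias hbias x0 hx0 hrec
    hx_adapted hg_L2 hcond_mean hcond_var t ht
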